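/- arXiv:2311.04161 — 2 statements merged into one kernel-verified Lean document; each statement's English description precedes it below -/
import Mathlib

section
/- Let n be a positive integer and a ≥ 0 with na ≤ 1/2. Then the sum over k from 1 to n of binom(n,k) · sqrt((2k)!) · k · (a/2)^k is at most 4na. -/
open Finset

/-!
Since `(2k)! = C(2k, k) (k!)² ≤ 4^k (k!)²` and `C(n, k) k! ≤ n^k`, the `k`-th term is at most
`k (na)^k`. With `x = na ≤ 1/2`, the whole sum is then bounded by the series
`∑ k x^k = x / (1 - x)² ≤ 4x`.
-/

lemma Nat.factorial_two_mul_le_four_pow_mul_sq (k : ℕ) :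
    (2 * k).factorial ≤ 4 ^ k * k.factorial ^ 2 := by
  have h := Nat.choose_mul_factorial_mul_factorial (show k ≤ 2 * k by omega)
  rw [show 2 * k - k = k by omega, ← Nat.centralBinom_eq_two_mul_choose] at h
  rw [← h, mul_assoc, ← sq]
  exact Nat.mul_le_mul_right _ (Nat.centralBinom_le_four_pow k)

lemma Real.sqrt_factorial_two_mul_le (k : ℕ) : √((2 * k).factorial) ≤ 2 ^ k * k.factorial := by
  rw [Real.sqrt_le_left (by positivity), mul_pow, ← pow_mul, mul_comm k 2, pow_mul]
  norm_num
  exact_mod_cast Nat.factorial_two_mul_le_four_pow_mul_sq k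

lemma choose_mul_sqrt_factorial_two_mul_mul_pow_le (n k : ℕ) {a : ℝ} (ha : 0 ≤ a) :
    (n.choose k : ℝ) * √((2 * k).factorial) * (a / 2) ^ k ≤ (n * a) ^ k := by
  have hchoose : (n.choose k : ℝ) * k.factorial ≤ (n : ℝ) ^ k := by
    rw [← Nat.cast_mul, ← Nat.cast_pow, mul_comm, ← Nat.descFactorial_eq_factorial_mul_choose]
    exact_mod_cast Nat.descFactorial_le_pow n k
  calc (n.choose k : ℝ) * √((2 * k).factorial) * (a / 2) ^ k
      ≤ (n.choose k : ℝ) * (2 ^ k * k.factorial) * (a / 2) ^ k := by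
        gcongr; exact Real.sqrt_factorial_two_mul_le k
    _ = (n.choose k * k.factorial : ℝ) * a ^ k := by
        rw [div_pow]; field_simp
    _ ≤ (n : ℝ) ^ k * a ^ k := by gcongr
    _ = (n * a) ^ k := (mul_pow _ _ _).symm

lemma sum_natCast_mul_pow_le (s : Finset ℕ) {x : ℝ} (hx₀ : 0 ≤ x) (hx₁ : x < 1) :
    ∑ k ∈ s, (k : ℝ) * x ^ k ≤ x / (1 - x) ^ 2 :=
  sum_le_hasSum s (fun _ _ => by positivity)
    (hasSum_coe_mul_geometric_of_norm_lt_one (by rwa [Real.norm_of_nonneg hx₀]))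

lemma sum_natCast_mul_pow_le_four_mul (s : Finset ℕ) {x : ℝ} (hx₀ : 0 ≤ x) (hx : x ≤ 1 / 2) :
    ∑ k ∈ s, (k : ℝ) * x ^ k ≤ 4 * x := by
  have hsq : 1 / 4 ≤ (1 - x) ^ 2 := by nlinarith
  calc ∑ k ∈ s, (k : ℝ) * x ^ k ≤ x / (1 - x) ^ 2 := sum_natCast_mul_pow_le s hx₀ (by linarith)
    _ ≤ x / (1 / 4) := div_le_div_of_nonneg_left hx₀ (by norm_num) hsq
    _ = 4 * x := by ring

theorem sum_choose_sqrt_factorial_mul_k_le_general (n : ℕ) (a : ℝ) (ha : 0 ≤ a)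
    (hna : (n : ℝ) * a ≤ 1 / 2) :
    ∑ k ∈ Finset.Icc 1 n,
        (n.choose k : ℝ) * Real.sqrt ((2 * k).factorial) * (k : ℝ) * (a / 2) ^ k
      ≤ 4 * n * a := by
  calc ∑ k ∈ Icc 1 n, (n.choose k : ℝ) * √((2 * k).factorial) * (k : ℝ) * (a / 2) ^ k
      ≤ ∑ k ∈ Icc 1 n, (k : ℝ) * (n * a) ^ k := by
        refine sum_le_sum fun k _ => ?_
        rw [mul_right_comm _ (k : ℝ), mul_comm (k : ℝ)]
        exact mul_le_mul_of_nonneg_right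
          (choose_mul_sqrt_factorial_two_mul_mul_pow_le n k ha) k.cast_nonneg
    _ ≤ 4 * (n * a) := sum_natCast_mul_pow_le_four_mul _ (by positivity) hna
    _ = 4 * n * a := by ring

theorem sum_choose_sqrt_factorial_mul_k_le (n : ℕ) (hn : 0 < n) (a : ℝ) (ha : 0 ≤ a)
    (hna : (n : ℝ) * a ≤ 1 / 2) :
    ∑ k ∈ Finset.Icc 1 n,
        (n.choose k : ℝ) * Real.sqrt ((2 * k).factorial) * (k : ℝ) * (a / 2) ^ k
      ≤ 4 * n * a :=
  sum_choose_sqrt_factorial_mul_k_le_general n a ha hna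
end

section
/- Let G(t) = ∫ Φ_θ(t − u/n) s^{*n}(u) du, where Φ_θ is the CDF of a centered Gaussian with variance θ² and s is a probability density satisfying s^{*n}(u) ≤ Bn/(n^{(β+1)/β} + |u|^{1+β}) for constants B > 0 and β ≥ 1. Then for every t > 0, 1 − G(t) ≤ exp(−t²/(8θ²)) + 2^β B / (β n^{β−1} t^β). -/
/-!
Since `s^{*n}` has total mass one, `1 - G(t) = ∫ (1 - Φ_θ(t - u / n)) s^{*n}(u) du`; split this
integral at `u = n t / 2`. Below the split point `t - u / n ≥ t / 2`, and the Chernoff bound for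
the Gaussian gives `1 - Φ_θ(t / 2) ≤ exp(-t² / (8 θ²))`. Above it, the decay hypothesis bounds
`s^{*n}(u)` by `B n u^{-(1+β)}`, whose tail integral is `B n (n t / 2)^{-β} / β`.
-/

open MeasureTheory Real

/-- `convIter s k` is the `(k+1)`-fold self-convolution of `s`:
    `convIter s 0 = s` and `convIter s (n-1) = s^{*n}`. -/
noncomputable def convIter (s : ℝ → ℝ) : ℕ → ℝ → ℝ
  | 0 => s
  | k + 1 => fun x => ∫ y : ℝ, s y * convIter s k (x - y)

open Set ProbabilityTheory
open scoped NNReal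

section convIter

variable {s : ℝ → ℝ}

lemma convIter_succ (k : ℕ) :
    convIter s (k + 1) = convolution s (convIter s k) (ContinuousLinearMap.mul ℝ ℝ) volume := by
  ext x
  simp [convIter, convolution]

lemma convIter_nonneg (hs : ∀ x, 0 ≤ s x) (k : ℕ) (x : ℝ) : 0 ≤ convIter s k x := by
  induction k generalizing x with
  | zero => exact hs x
  | succ k ih => exact integral_nonneg fun y => mul_nonneg (hs y) (ih _)

lemma integrable_convIter (hs : Integrable s) (k : ℕ) : Integrable (convIter s k) := by
  induction k with
  | zero => exact hs
  | succ k ih => rw [convIter_succ]; exact hs.integrable_convolution _ ih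

lemma integral_convIter (hs : Integrable s) (hs_tot : ∫ x, s x = 1) (k : ℕ) :
    ∫ x, convIter s k x = 1 := by
  induction k with
  | zero => exact hs_tot
  | succ k ih =>
    rw [convIter_succ, integral_convolution _ hs (integrable_convIter hs k)]
    simp [hs_tot, ih]

end convIter

lemma hasSubgaussianMGF_id_gaussianReal (v : ℝ≥0) : HasSubgaussianMGF id v (gaussianReal 0 v) :=
  ⟨integrable_exp_mul_gaussianReal, fun t => by simp [mgf_id_gaussianReal]⟩

lemma one_sub_cdf_gaussianReal_le (v : ℝ≥0) {x y : ℝ} (hx : 0 ≤ x) (hxy : x ≤ y) :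
    1 - cdf (gaussianReal 0 v) y ≤ exp (-x ^ 2 / (2 * v)) := by
  rw [cdf_eq_real, ← probReal_compl_eq_one_sub measurableSet_Iic, compl_Iic]
  calc (gaussianReal 0 v).real (Ioi y) ≤ (gaussianReal 0 v).real {z | x ≤ id z} :=
        measureReal_mono fun z (hz : y < z) => hxy.trans hz.le
    _ ≤ exp (-x ^ 2 / (2 * v)) := (hasSubgaussianMGF_id_gaussianReal v).measure_ge_le hx

lemma cdf_gaussianReal_eq_integral {θ : ℝ} (hθ : 0 < θ) (x : ℝ) :
    cdf (gaussianReal 0 (θ ^ 2).toNNReal) x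
      = (√(2 * π) * θ)⁻¹ * ∫ v in Iic x, exp (-v ^ 2 / (2 * θ ^ 2)) := by
  have hv : (θ ^ 2).toNNReal ≠ 0 := by simp [hθ.ne']
  rw [cdf_eq_real, measureReal_def, gaussianReal_apply_eq_integral _ hv,
    ENNReal.toReal_ofReal (setIntegral_nonneg measurableSet_Iic
      fun y _ => gaussianPDFReal_nonneg _ _ _), gaussianPDFReal_def, integral_const_mul]
  simp only [Real.coe_toNNReal _ (sq_nonneg θ), sub_zero]
  rw [sqrt_mul (by positivity), sqrt_sq hθ.le]

lemma one_sub_integral_mul_le {k g : ℝ → ℝ} (hk_nonneg : ∀ u, 0 ≤ k u) (hk : Integrable k)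
    (hk_tot : ∫ u, k u = 1) (hg : AEStronglyMeasurable g) (hg_nonneg : ∀ u, 0 ≤ g u)
    (hg_le : ∀ u, g u ≤ 1) {m ε : ℝ} (hε : ∀ u ≤ m, 1 - g u ≤ ε) :
    1 - ∫ u, g u * k u ≤ ε + ∫ u in Ioi m, k u := by
  have hgk : Integrable fun u => g u * k u :=
    hk.bdd_mul hg (.of_forall fun u => by rw [norm_of_nonneg (hg_nonneg u)]; exact hg_le u)
  have hgk' : Integrable fun u => (1 - g u) * k u := by
    simp only [sub_mul, one_mul]; exact hk.sub hgk
  have hε_nonneg : 0 ≤ ε := (sub_nonneg.2 (hg_le m)).trans (hε m le_rfl)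
  have h_low : ∫ u in Iic m, (1 - g u) * k u ≤ ε := calc
    ∫ u in Iic m, (1 - g u) * k u ≤ ∫ u in Iic m, ε * k u :=
      setIntegral_mono_on hgk'.integrableOn (hk.const_mul ε).integrableOn measurableSet_Iic
        fun u hu => mul_le_mul_of_nonneg_right (hε u hu) (hk_nonneg u)
    _ = ε * ∫ u in Iic m, k u := integral_const_mul ε _
    _ ≤ ε * 1 := by
      gcongr
      exact hk_tot ▸ setIntegral_le_integral hk (.of_forall hk_nonneg)
    _ = ε := mul_one ε
  have h_high : ∫ u in Ioi m, (1 - g u) * k u ≤ ∫ u in Ioi m, k u :=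
    setIntegral_mono_on hgk'.integrableOn hk.integrableOn measurableSet_Ioi fun u _ =>
      mul_le_of_le_one_left (hk_nonneg u) (by linarith [hg_nonneg u])
  calc 1 - ∫ u, g u * k u = ∫ u, (1 - g u) * k u := by
        simp only [sub_mul, one_mul]; rw [integral_sub hk hgk, hk_tot]
    _ = (∫ u in Iic m, (1 - g u) * k u) + ∫ u in Ioi m, (1 - g u) * k u :=
        (intervalIntegral.integral_Iic_add_Ioi hgk'.integrableOn hgk'.integrableOn).symm
    _ ≤ ε + ∫ u in Ioi m, k u := add_le_add h_low h_high

lemma div_add_rpow_le_mul_rpow_neg {a c u p : ℝ} (ha : 0 ≤ a) (hc : 0 ≤ c) (hu : 0 < u) :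
    a / (c + u ^ p) ≤ a * u ^ (-p) := by
  rw [rpow_neg hu.le, ← div_eq_mul_inv]
  exact div_le_div_of_nonneg_left ha (rpow_pos_of_pos hu p) (le_add_of_nonneg_left hc)

lemma setIntegral_Ioi_le_of_le_rpow {k : ℝ → ℝ} {C β m : ℝ} (hk : IntegrableOn k (Ioi m))
    (hβ : 0 < β) (hm : 0 < m) (h : ∀ u, m < u → k u ≤ C * u ^ (-(1 + β))) :
    ∫ u in Ioi m, k u ≤ C * m ^ (-β) / β := by
  have hβ' : -(1 + β) < -1 := by linarith
  calc ∫ u in Ioi m, k u ≤ ∫ u in Ioi m, C * u ^ (-(1 + β)) :=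
        setIntegral_mono_on hk ((integrableOn_Ioi_rpow_of_lt hβ' hm).const_mul C)
          measurableSet_Ioi h
    _ = C * m ^ (-β) / β := by
        rw [integral_const_mul, integral_Ioi_rpow_of_lt hβ' hm,
          show -(1 + β) + 1 = -β by ring, neg_div_neg_eq, mul_div_assoc]

theorem smoothed_mean_tail_bound
    (θ B β : ℝ) (n : ℕ)
    (hθ : 0 < θ) (hB : 0 < B) (hβ : 1 ≤ β) (hn : 0 < n)
    (s : ℝ → ℝ)
    (hs_nonneg : ∀ x, 0 ≤ s x) (hs_int : Integrable s)
    (hs_tot : ∫ x, s x = 1)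
    (hs_bound : ∀ u : ℝ,
      convIter s (n - 1) u
        ≤ B * n / ((n : ℝ) ^ ((β + 1) / β) + |u| ^ (1 + β))) :
    ∀ t : ℝ, 0 < t →
      1 - (∫ u : ℝ,
            ((Real.sqrt (2 * Real.pi) * θ)⁻¹ *
              ∫ v in Set.Iic (t - u / n), Real.exp (-v ^ 2 / (2 * θ ^ 2))) *
              convIter s (n - 1) u)
        ≤ Real.exp (-t ^ 2 / (8 * θ ^ 2))
          + (2 : ℝ) ^ β * B / (β * (n : ℝ) ^ (β - 1) * t ^ β) := by
  intro t ht
  simp_rw [← cdf_gaussianReal_eq_integral hθ]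
  set Φ := cdf (gaussianReal 0 (θ ^ 2).toNNReal)
  have hn' : (0 : ℝ) < n := Nat.cast_pos.2 hn
  have hm : 0 < n * t / 2 := by positivity
  have h_near : ∀ u ≤ n * t / 2, 1 - Φ (t - u / n) ≤ exp (-t ^ 2 / (8 * θ ^ 2)) := by
    intro u hu
    have h_half : t / 2 ≤ t - u / n := by
      have : u / n ≤ t / 2 := (div_le_iff₀ hn').2 (by linarith)
      linarith
    convert one_sub_cdf_gaussianReal_le _ (by positivity) h_half using 2
    rw [Real.coe_toNNReal _ (sq_nonneg θ)]
    ring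
  have h_far : ∀ u, n * t / 2 < u → convIter s (n - 1) u ≤ B * n * u ^ (-(1 + β)) := by
    intro u hu
    have hu0 : 0 < u := hm.trans hu
    refine (hs_bound u).trans ?_
    rw [abs_of_pos hu0]
    exact div_add_rpow_le_mul_rpow_neg (by positivity) (by positivity) hu0
  calc _ ≤ exp (-t ^ 2 / (8 * θ ^ 2)) + ∫ u in Ioi (n * t / 2), convIter s (n - 1) u :=
        one_sub_integral_mul_le (convIter_nonneg hs_nonneg _) (integrable_convIter hs_int _)
          (integral_convIter hs_int hs_tot _)
          (Φ.mono.measurable.comp (by fun_prop)).aestronglyMeasurable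
          (fun _ => cdf_nonneg _ _) (fun _ => cdf_le_one _ _) h_near
    _ ≤ exp (-t ^ 2 / (8 * θ ^ 2)) + B * n * (n * t / 2) ^ (-β) / β := by
        gcongr
        exact setIntegral_Ioi_le_of_le_rpow (integrable_convIter hs_int _).integrableOn
          (by linarith) hm h_far
    _ = _ := by
        congr 1
        rw [rpow_neg hm.le, div_rpow (by positivity) zero_le_two, mul_rpow hn'.le ht.le,
          rpow_sub_one hn'.ne']
        field_simp
end
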